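/- Let k be the field with 2 elements, and let W_2 denote the T-space of k[x]_0 generated by {x + x², x⁵}. Then W_2 is a maximal T-space of k[x]_0 (W_2 is proper and every T-space properly containing W_2 contains x), and moreover x⁷ ∉ W_2. -/

import Mathlib

/-- A T-space of `k[x]₀`: a `k`-submodule of `k[x]` all of whose elements have zero
constant term, closed under substitution `p ↦ p ∘ g` for every polynomial `g` with
zero constant term. -/
def IsTSpace (k : Type*) [Field k] (V : Submodule k (Polynomial k)) : Prop :=
  (∀ p ∈ V, p.coeff 0 = 0) ∧
    ∀ p ∈ V, ∀ g : Polynomial k, g.coeff 0 = 0 → p.comp g ∈ V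

/-- The T-space of `k[x]₀` generated by a set `S`. -/
noncomputable def TSpaceGen (k : Type*) [Field k] (S : Set (Polynomial k)) : Submodule k (Polynomial k) :=
  sInf {V | IsTSpace k V ∧ S ⊆ (V : Set (Polynomial k))}

/-- A T-ideal of `k[x]₀`: a T-space closed under multiplication by polynomials with
zero constant term. -/
def IsTIdeal (k : Type*) [Field k] (V : Submodule k (Polynomial k)) : Prop :=
  IsTSpace k V ∧ ∀ p ∈ V, ∀ g : Polynomial k, g.coeff 0 = 0 → p * g ∈ V

/-- The T-ideal of `k[x]₀` generated by a set `S`. -/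
noncomputable def TIdealGen (k : Type*) [Field k] (S : Set (Polynomial k)) : Submodule k (Polynomial k) :=
  sInf {V | IsTIdeal k V ∧ S ⊆ (V : Set (Polynomial k))}

/-!
Modulo `W₂` one has `g² ≡ g` and `g⁵ ≡ 0` for every `g ∈ k[x]₀`, hence also `g⁴h ≡ h⁴g`
(expand `(g + h)⁵` in characteristic 2). On monomials these say `x^(2m) ≡ x^m`, `x^(5m) ≡ 0`
and `x^(4i+j) ≡ x^(4j+i)`, which reduce every `xⁿ` with `n ≥ 1` to `0`, `x`, `x³` or `x⁷`.

The functional `p ↦ ∑_{gcd(n, 15) = 1} pₙ` vanishes on all `g + g²` and `g⁵`: its support is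
stable under doubling, avoids the multiples of 5, and is symmetric under `4i + j ↔ 4j + i`
since `4(4i + j) ≡ 4j + i (mod 15)`. It is nonzero on `x` and on `x⁷`, so neither lies in `W₂`.

A T-space `U ⊋ W₂` contains some `r = ax + bx³ + cx⁷ ∉ W₂`. Substituting `x + x²`, `(x + x²)³`
and `(x + x²)⁷` into `r` gives `(b + c)x`, `(a + b + c)x` and `(a + b)x` modulo `W₂`, and one of
these coefficients is `1` unless `a = b = c = 0`.
-/

open Polynomial

theorem Polynomial.coeff_zero_comp {R : Type*} [CommSemiring R] (p q : R[X]) :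
    (p.comp q).coeff 0 = p.eval (q.coeff 0) := by
  rw [coeff_zero_eq_eval_zero, eval_comp, coeff_zero_eq_eval_zero]

theorem Polynomial.coeff_zero_X_pow {R : Type*} [Semiring R] {n : ℕ} (hn : n ≠ 0) :
    (X ^ n : R[X]).coeff 0 = 0 := by
  rw [coeff_X_pow, if_neg hn.symm]

theorem SModEq.mem_of_le {R M : Type*} [Ring R] [AddCommGroup M] [Module R M]
    {U V : Submodule R M} (hUV : U ≤ V) {x y : M} (h : x ≡ y [SMOD U]) (hy : y ∈ V) : x ∈ V := by
  simpa using V.add_mem (hUV (SModEq.sub_mem.1 h)) hy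

section TSpace

variable {k : Type*} [Field k]

theorem subset_tSpaceGen (S : Set k[X]) : S ⊆ TSpaceGen k S :=
  fun _ hp => Submodule.mem_sInf.2 fun _ hV => hV.2 hp

theorem tSpaceGen_le {S : Set k[X]} {V : Submodule k k[X]} (hV : IsTSpace k V)
    (hS : S ⊆ V) : TSpaceGen k S ≤ V :=
  sInf_le ⟨hV, hS⟩

theorem comp_mem_tSpaceGen {S : Set k[X]} {p g : k[X]} (hp : p ∈ TSpaceGen k S)
    (hg : g.coeff 0 = 0) : p.comp g ∈ TSpaceGen k S :=
  Submodule.mem_sInf.2 fun V hV => hV.1.2 p (Submodule.mem_sInf.1 hp V hV) g hg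

theorem isTSpace_tSpaceGen {S : Set k[X]} {V : Submodule k k[X]} (hV : IsTSpace k V)
    (hS : S ⊆ V) : IsTSpace k (TSpaceGen k S) :=
  ⟨fun p hp => hV.1 p (tSpaceGen_le hV hS hp), fun _ hp _ hg => comp_mem_tSpaceGen hp hg⟩

theorem IsTSpace.comp_smodEq {W : Submodule k k[X]} (hW : IsTSpace k W) {p q g : k[X]}
    (h : p ≡ q [SMOD W]) (hg : g.coeff 0 = 0) : p.comp g ≡ q.comp g [SMOD W] := by
  rw [SModEq.sub_mem, ← sub_comp]
  exact hW.2 _ (SModEq.sub_mem.1 h) g hg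

variable {M : Type*} [AddCommGroup M] [Module k M]

def tSpaceKer (φ : k[X] →ₗ[k] M) : Submodule k k[X] where
  carrier := {p | p.coeff 0 = 0 ∧ ∀ g : k[X], g.coeff 0 = 0 → φ (p.comp g) = 0}
  add_mem' := by
    rintro p q ⟨hp0, hp⟩ ⟨hq0, hq⟩
    exact ⟨by simp [hp0, hq0], fun g hg => by simp [add_comp, hp g hg, hq g hg]⟩
  zero_mem' := ⟨coeff_zero 0, fun g _ => by simp⟩
  smul_mem' := by
    rintro c p ⟨hp0, hp⟩
    exact ⟨by simp [hp0], fun g hg => by simp [smul_comp, hp g hg]⟩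

theorem isTSpace_tSpaceKer (φ : k[X] →ₗ[k] M) : IsTSpace k (tSpaceKer φ) := by
  refine ⟨fun p hp => hp.1, fun p ⟨hp0, hp⟩ g hg => ⟨?_, fun h hh => ?_⟩⟩
  · rw [coeff_zero_comp, hg, ← coeff_zero_eq_eval_zero, hp0]
  · rw [comp_assoc]
    exact hp _ (by rw [coeff_zero_comp, hh, ← coeff_zero_eq_eval_zero, hg])

theorem notMem_tSpaceGen_of_map_ne_zero {S : Set k[X]} (φ : k[X] →ₗ[k] M)
    (hS : S ⊆ tSpaceKer φ) {p : k[X]} (hp : φ p ≠ 0) : p ∉ TSpaceGen k S := fun h =>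
  hp (by simpa using (tSpaceGen_le (isTSpace_tSpaceKer φ) hS h).2 X (coeff_X_zero))

end TSpace

namespace TSpaceW2

local notation "W₂" => TSpaceGen (ZMod 2) {(X : (ZMod 2)[X]) + X ^ 2, X ^ 5}

def coprimeIndicator (n : ℕ) : ZMod 2 := if n.Coprime 15 then 1 else 0

theorem coprimeIndicator_two_mul (n : ℕ) : coprimeIndicator (2 * n) = coprimeIndicator n := by
  unfold coprimeIndicator
  exact if_congr (Nat.coprime_mul_iff_left.trans (and_iff_right (by decide))) rfl rfl

theorem coprimeIndicator_five_mul (n : ℕ) : coprimeIndicator (5 * n) = 0 := by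
  simp [coprimeIndicator, Nat.coprime_mul_iff_left, show ¬ Nat.Coprime 5 15 by decide]

theorem coprimeIndicator_four_mul_add (i j : ℕ) :
    coprimeIndicator (4 * i + j) = coprimeIndicator (4 * j + i) := by
  have h : 2 * (2 * (4 * i + j)) = (4 * j + i) + 15 * i := by ring
  rw [← coprimeIndicator_two_mul, ← coprimeIndicator_two_mul, h]
  simp only [coprimeIndicator, Nat.coprime_add_mul_left_left]

def sumCoeffCoprime : (ZMod 2)[X] →ₗ[ZMod 2] ZMod 2 :=
  lsum fun n => coprimeIndicator n • LinearMap.id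

theorem sumCoeffCoprime_monomial (n : ℕ) (a : ZMod 2) :
    sumCoeffCoprime (monomial n a) = coprimeIndicator n * a := by
  simp [sumCoeffCoprime, lsum_apply]

theorem sumCoeffCoprime_sq (p : (ZMod 2)[X]) : sumCoeffCoprime (p ^ 2) = sumCoeffCoprime p := by
  induction p using Polynomial.induction_on' with
  | add p q hp hq => rw [CharTwo.add_sq, map_add, map_add, hp, hq]
  | monomial n a =>
    rw [monomial_pow, sumCoeffCoprime_monomial, sumCoeffCoprime_monomial, ZMod.pow_card,
      mul_comm n, coprimeIndicator_two_mul]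

theorem sumCoeffCoprime_pow_four_mul (p q : (ZMod 2)[X]) :
    sumCoeffCoprime (p ^ 4 * q) = sumCoeffCoprime (q ^ 4 * p) := by
  have add_pow_four (a b : (ZMod 2)[X]) : (a + b) ^ 4 = a ^ 4 + b ^ 4 := by grind
  induction p using Polynomial.induction_on' with
  | add p₁ p₂ h₁ h₂ => simp only [add_pow_four, add_mul, mul_add, map_add, h₁, h₂]
  | monomial n a =>
    induction q using Polynomial.induction_on' with
    | add q₁ q₂ h₁ h₂ => simp only [add_pow_four, add_mul, mul_add, map_add, h₁, h₂]
    | monomial m b =>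
      have h4 (c : ZMod 2) : c ^ 4 = c := by revert c; decide
      simp only [monomial_pow, monomial_mul_monomial, sumCoeffCoprime_monomial, h4, mul_comm _ 4,
        coprimeIndicator_four_mul_add n m, mul_comm a b]

theorem sumCoeffCoprime_pow_five (p : (ZMod 2)[X]) : sumCoeffCoprime (p ^ 5) = 0 := by
  induction p using Polynomial.induction_on' with
  | add p q hp hq =>
    have h : (p + q) ^ 5 = p ^ 5 + (p ^ 4 * q + q ^ 4 * p) + q ^ 5 := by grind
    rw [h, map_add, map_add, map_add, hp, hq, sumCoeffCoprime_pow_four_mul,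
      CharTwo.add_self_eq_zero, add_zero, add_zero]
  | monomial n a =>
    rw [monomial_pow, sumCoeffCoprime_monomial, mul_comm n, coprimeIndicator_five_mul, zero_mul]

theorem gens_subset_tSpaceKer :
    {(X : (ZMod 2)[X]) + X ^ 2, X ^ 5} ⊆ (tSpaceKer sumCoeffCoprime : Set (ZMod 2)[X]) := by
  rintro p (rfl | rfl)
  · refine ⟨by simp, fun g _ => ?_⟩
    rw [add_comp, X_comp, X_pow_comp, map_add, sumCoeffCoprime_sq, CharTwo.add_self_eq_zero]
  · exact ⟨by simp, fun g _ => by rw [X_pow_comp, sumCoeffCoprime_pow_five]⟩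

theorem isTSpace_W₂ : IsTSpace (ZMod 2) W₂ :=
  isTSpace_tSpaceGen (isTSpace_tSpaceKer _) gens_subset_tSpaceKer

theorem X_pow_notMem_W₂ {n : ℕ} (hn : n.Coprime 15) : (X : (ZMod 2)[X]) ^ n ∉ W₂ := by
  refine notMem_tSpaceGen_of_map_ne_zero _ gens_subset_tSpaceKer ?_
  rw [X_pow_eq_monomial, sumCoeffCoprime_monomial, coprimeIndicator, if_pos hn]
  exact one_ne_zero

section Congruences

variable {g h : (ZMod 2)[X]}

theorem sq_smodEq (hg : g.coeff 0 = 0) : g ^ 2 ≡ g [SMOD W₂] := by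
  have h : ((X : (ZMod 2)[X]) + X ^ 2).comp g ∈ W₂ :=
    comp_mem_tSpaceGen (subset_tSpaceGen _ (Set.mem_insert _ _)) hg
  rw [add_comp, X_comp, X_pow_comp] at h
  rwa [SModEq.sub_mem, CharTwo.sub_eq_add, add_comm (g ^ 2)]

theorem pow_five_mem (hg : g.coeff 0 = 0) : g ^ 5 ∈ W₂ := by
  have h : ((X : (ZMod 2)[X]) ^ 5).comp g ∈ W₂ :=
    comp_mem_tSpaceGen (subset_tSpaceGen _ (Set.mem_insert_of_mem _ rfl)) hg
  rwa [X_pow_comp] at h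

theorem pow_four_mul_smodEq (hg : g.coeff 0 = 0) (hh : h.coeff 0 = 0) :
    g ^ 4 * h ≡ h ^ 4 * g [SMOD W₂] := by
  have hgh : (g + h).coeff 0 = 0 := by rw [coeff_add, hg, hh, add_zero]
  have h5 := Submodule.add_mem _
    (Submodule.add_mem _ (pow_five_mem hgh) (pow_five_mem hg)) (pow_five_mem hh)
  rw [SModEq.sub_mem]
  convert h5 using 1
  grind

theorem X_pow_two_mul_smodEq (m : ℕ) : (X : (ZMod 2)[X]) ^ (2 * m) ≡ X ^ m [SMOD W₂] := by
  rcases eq_or_ne m 0 with rfl | hm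
  · rfl
  · simpa [← pow_mul, mul_comm] using sq_smodEq (coeff_zero_X_pow (R := ZMod 2) hm)

theorem X_pow_five_mul_mem {m : ℕ} (hm : m ≠ 0) : (X : (ZMod 2)[X]) ^ (5 * m) ∈ W₂ := by
  simpa [← pow_mul, mul_comm] using pow_five_mem (coeff_zero_X_pow (R := ZMod 2) hm)

theorem X_pow_four_mul_add_smodEq {i j : ℕ} (hi : i ≠ 0) (hj : j ≠ 0) :
    (X : (ZMod 2)[X]) ^ (4 * i + j) ≡ X ^ (4 * j + i) [SMOD W₂] := by
  simpa only [← pow_mul, ← pow_add, mul_comm _ 4] using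
    pow_four_mul_smodEq (coeff_zero_X_pow (R := ZMod 2) hi) (coeff_zero_X_pow (R := ZMod 2) hj)

end Congruences

theorem X_pow_mem_sup_span {n : ℕ} (hn : n ≠ 0) :
    (X : (ZMod 2)[X]) ^ n ∈ W₂ ⊔ Submodule.span (ZMod 2) {X, X ^ 3, X ^ 7} := by
  induction n using Nat.strong_induction_on with
  | _ n ih =>
  have hW := le_sup_left (a := W₂) (b := Submodule.span (ZMod 2) {X, X ^ 3, X ^ 7})
  have h7 : (X : (ZMod 2)[X]) ^ 7 ∈ W₂ ⊔ Submodule.span (ZMod 2) {X, X ^ 3, X ^ 7} :=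
    Submodule.mem_sup_right (Submodule.subset_span (by simp))
  by_cases h5 : 5 ∣ n
  · obtain ⟨m, rfl⟩ := h5
    exact hW (X_pow_five_mul_mem (by omega))
  by_cases h2 : 2 ∣ n
  · obtain ⟨m, rfl⟩ := h2
    exact (X_pow_two_mul_smodEq m).mem_of_le hW (ih m (by omega) (by omega))
  obtain rfl | rfl | rfl | rfl | hlt : n = 1 ∨ n = 3 ∨ n = 7 ∨ n = 11 ∨ n % 4 < n / 4 := by
    rcases Nat.lt_or_ge n 16 with h | h
    · interval_cases n <;> omega
    · omega
  · exact Submodule.mem_sup_right (Submodule.subset_span (by simp))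
  · exact Submodule.mem_sup_right (Submodule.subset_span (by simp))
  · exact h7
  · exact ((X_pow_four_mul_add_smodEq (i := 2) (j := 3) (by omega) (by omega)).trans
      (X_pow_two_mul_smodEq 7)).mem_of_le hW h7
  · have h := X_pow_four_mul_add_smodEq (i := n / 4) (j := n % 4) (by omega) (by omega)
    rw [Nat.div_add_mod] at h
    exact h.mem_of_le hW (ih _ (by omega) (by omega))

theorem mem_sup_span {p : (ZMod 2)[X]} (hp : p.coeff 0 = 0) :
    p ∈ W₂ ⊔ Submodule.span (ZMod 2) {X, X ^ 3, X ^ 7} := by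
  rw [p.as_sum_support_C_mul_X_pow]
  refine Submodule.sum_mem _ fun n hn => ?_
  rw [← smul_eq_C_mul]
  refine Submodule.smul_mem _ _ (X_pow_mem_sup_span fun h => ?_)
  exact mem_support_iff.1 hn (h ▸ hp)

theorem X_pow_four_smodEq : (X : (ZMod 2)[X]) ^ 4 ≡ X [SMOD W₂] :=
  (X_pow_two_mul_smodEq 2).trans (by simpa using X_pow_two_mul_smodEq 1)

theorem X_pow_nine_smodEq : (X : (ZMod 2)[X]) ^ 9 ≡ X ^ 3 [SMOD W₂] :=
  (X_pow_four_mul_add_smodEq (i := 2) (j := 1) two_ne_zero one_ne_zero).trans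
    (X_pow_two_mul_smodEq 3)

theorem X_pow_twentyOne_smodEq : (X : (ZMod 2)[X]) ^ 21 ≡ X ^ 3 [SMOD W₂] :=
  (X_pow_four_mul_add_smodEq (i := 5) (j := 1) (by norm_num) one_ne_zero).trans X_pow_nine_smodEq

theorem X_pow_fortyNine_smodEq : (X : (ZMod 2)[X]) ^ 49 ≡ X [SMOD W₂] :=
  ((X_pow_four_mul_add_smodEq (i := 12) (j := 1) (by norm_num) one_ne_zero).trans
    (X_pow_two_mul_smodEq 8)).trans ((X_pow_two_mul_smodEq 4).trans X_pow_four_smodEq)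

theorem X_add_X_sq_pow_three_smodEq : ((X : (ZMod 2)[X]) + X ^ 2) ^ 3 ≡ X [SMOD W₂] := by
  have h4 := X_pow_four_smodEq
  have h5 : (X : (ZMod 2)[X]) ^ 5 ≡ 0 [SMOD W₂] := SModEq.zero.2 (X_pow_five_mul_mem one_ne_zero)
  have h6 := X_pow_two_mul_smodEq 3
  calc ((X : (ZMod 2)[X]) + X ^ 2) ^ 3 = X ^ 3 + X ^ 4 + X ^ 5 + X ^ 6 := by grind
    _ ≡ X ^ 3 + X + 0 + X ^ 3 [SMOD W₂] := by gcongr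
    _ = X := by grind

theorem X_add_X_sq_pow_seven_smodEq : ((X : (ZMod 2)[X]) + X ^ 2) ^ 7 ≡ X [SMOD W₂] := by
  have h8 := (X_pow_two_mul_smodEq 4).trans X_pow_four_smodEq
  have h9 := X_pow_nine_smodEq
  have h10 : (X : (ZMod 2)[X]) ^ 10 ≡ 0 [SMOD W₂] :=
    SModEq.zero.2 (X_pow_five_mul_mem two_ne_zero)
  have h14 := X_pow_two_mul_smodEq 7
  have h11 := (X_pow_four_mul_add_smodEq (i := 2) (j := 3) two_ne_zero three_ne_zero).trans h14
  have h12 := (X_pow_two_mul_smodEq 6).trans (X_pow_two_mul_smodEq 3)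
  have h13 := X_pow_four_mul_add_smodEq (i := 3) (j := 1) three_ne_zero one_ne_zero
  calc ((X : (ZMod 2)[X]) + X ^ 2) ^ 7
        = X ^ 7 + X ^ 8 + X ^ 9 + X ^ 10 + X ^ 11 + X ^ 12 + X ^ 13 + X ^ 14 := by grind
    _ ≡ X ^ 7 + X + X ^ 3 + 0 + X ^ 7 + X ^ 3 + X ^ 7 + X ^ 7 [SMOD W₂] := by gcongr
    _ = X := by grind

noncomputable def normalForm (a b c : ZMod 2) : (ZMod 2)[X] := a • X + b • X ^ 3 + c • X ^ 7

theorem exists_normalForm_eq {r : (ZMod 2)[X]}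
    (hr : r ∈ Submodule.span (ZMod 2) {X, X ^ 3, X ^ 7}) : ∃ a b c, normalForm a b c = r := by
  obtain ⟨a, _, hz, rfl⟩ := Submodule.mem_span_insert.1 hr
  obtain ⟨b, c, rfl⟩ := Submodule.mem_span_pair.1 hz
  exact ⟨a, b, c, add_assoc _ _ _⟩

theorem normalForm_comp (a b c : ZMod 2) (g : (ZMod 2)[X]) :
    (normalForm a b c).comp g = a • g + b • g ^ 3 + c • g ^ 7 := by
  simp only [normalForm, add_comp, smul_comp, X_comp, X_pow_comp]

theorem normalForm_comp_X_add_X_sq (a b c : ZMod 2) :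
    (normalForm a b c).comp (X + X ^ 2) ≡ (b + c) • X [SMOD W₂] := by
  have h1 : (X : (ZMod 2)[X]) + X ^ 2 ≡ 0 [SMOD W₂] :=
    SModEq.zero.2 (subset_tSpaceGen _ (Set.mem_insert _ _))
  have h3 := X_add_X_sq_pow_three_smodEq
  have h7 := X_add_X_sq_pow_seven_smodEq
  calc (normalForm a b c).comp (X + X ^ 2)
        = a • (X + X ^ 2) + b • (X + X ^ 2) ^ 3 + c • (X + X ^ 2) ^ 7 := normalForm_comp ..
    _ ≡ a • 0 + b • X + c • X [SMOD W₂] := by gcongr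
    _ = (b + c) • X := by module

theorem normalForm_comp_X_pow_three (a b c : ZMod 2) :
    (normalForm a b c).comp (X ^ 3) ≡ normalForm 0 (a + b + c) 0 [SMOD W₂] := by
  have h9 := X_pow_nine_smodEq
  have h21 := X_pow_twentyOne_smodEq
  calc (normalForm a b c).comp (X ^ 3) = a • X ^ 3 + b • X ^ 9 + c • X ^ 21 := by
        rw [normalForm_comp, ← pow_mul, ← pow_mul]
    _ ≡ a • X ^ 3 + b • X ^ 3 + c • X ^ 3 [SMOD W₂] := by gcongr
    _ = normalForm 0 (a + b + c) 0 := by simp only [normalForm]; module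

theorem normalForm_comp_X_pow_seven (a b c : ZMod 2) :
    (normalForm a b c).comp (X ^ 7) ≡ normalForm c b a [SMOD W₂] := by
  have h21 := X_pow_twentyOne_smodEq
  have h49 := X_pow_fortyNine_smodEq
  calc (normalForm a b c).comp (X ^ 7) = a • X ^ 7 + b • X ^ 21 + c • X ^ 49 := by
        rw [normalForm_comp, ← pow_mul, ← pow_mul]
    _ ≡ a • X ^ 7 + b • X ^ 3 + c • X [SMOD W₂] := by gcongr
    _ = normalForm c b a := by simp only [normalForm]; module

theorem X_mem_of_normalForm_mem {U : Submodule (ZMod 2) (ZMod 2)[X]} (hU : IsTSpace (ZMod 2) U)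
    (hWU : W₂ ≤ U) {a b c : ZMod 2} (hr : normalForm a b c ∈ U) (hrW : normalForm a b c ∉ W₂) :
    X ∈ U := by
  have hT : ((X : (ZMod 2)[X]) + X ^ 2).coeff 0 = 0 := by simp
  have subst {g q : (ZMod 2)[X]} (hg : g.coeff 0 = 0)
      (h : (normalForm a b c).comp g ≡ q [SMOD W₂]) : q ∈ U :=
    h.symm.mem_of_le hWU (hU.2 _ hr _ hg)
  have subst_comp_X_add_X_sq {g : (ZMod 2)[X]} {a' b' c' : ZMod 2} (hg : g.coeff 0 = 0)
      (h : (normalForm a b c).comp g ≡ normalForm a' b' c' [SMOD W₂]) : (b' + c') • X ∈ U := by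
    refine subst (g := g.comp (X + X ^ 2)) ?_ ?_
    · rw [coeff_zero_comp, hT, ← coeff_zero_eq_eval_zero, hg]
    · rw [← comp_assoc]
      exact (isTSpace_W₂.comp_smodEq h hT).trans (normalForm_comp_X_add_X_sq a' b' c')
  have h₁ : (b + c) • X ∈ U := subst hT (normalForm_comp_X_add_X_sq a b c)
  have h₂ : (a + b + c) • X ∈ U :=
    add_zero (a + b + c) ▸ subst_comp_X_add_X_sq (by simp) (normalForm_comp_X_pow_three a b c)
  have h₃ : (b + a) • X ∈ U := subst_comp_X_add_X_sq (by simp) (normalForm_comp_X_pow_seven a b c)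
  have coeff_cases : ∀ a b c : ZMod 2,
      a = 0 ∧ b = 0 ∧ c = 0 ∨ b + c = 1 ∨ a + b + c = 1 ∨ b + a = 1 := by decide
  rcases coeff_cases a b c with ⟨rfl, rfl, rfl⟩ | h | h | h
  · exact absurd (by simp [normalForm]) hrW
  · rwa [h, one_smul] at h₁
  · rwa [h, one_smul] at h₂
  · rwa [h, one_smul] at h₃

end TSpaceW2

open TSpaceW2 in
/-- Over the field with 2 elements, the T-space `W₂` generated by `{x + x², x⁵}` is a
maximal T-space of `k[x]₀`, and moreover `x⁷ ∉ W₂`. -/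
theorem W2_isMaximal :
    IsTSpace (ZMod 2) (TSpaceGen (ZMod 2) {Polynomial.X + Polynomial.X ^ 2, Polynomial.X ^ 5}) ∧
      Polynomial.X ∉
        TSpaceGen (ZMod 2) {Polynomial.X + Polynomial.X ^ 2, Polynomial.X ^ 5} ∧
      (∀ U : Submodule (ZMod 2) (Polynomial (ZMod 2)), IsTSpace (ZMod 2) U →
        TSpaceGen (ZMod 2) {Polynomial.X + Polynomial.X ^ 2, Polynomial.X ^ 5} < U →
        Polynomial.X ∈ U) ∧
      Polynomial.X ^ 7 ∉
        TSpaceGen (ZMod 2) {Polynomial.X + Polynomial.X ^ 2, Polynomial.X ^ 5} := by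
  refine ⟨isTSpace_W₂, by simpa using X_pow_notMem_W₂ (n := 1) (by decide), fun U hU hlt => ?_,
    X_pow_notMem_W₂ (by decide)⟩
  obtain ⟨p, hpU, hpW⟩ := SetLike.exists_of_lt hlt
  obtain ⟨w, hw, r, hr, rfl⟩ := Submodule.mem_sup.1 (mem_sup_span (hU.1 p hpU))
  obtain ⟨a, b, c, rfl⟩ := exists_normalForm_eq hr
  refine X_mem_of_normalForm_mem hU hlt.le ?_ fun h => hpW (Submodule.add_mem _ hw h)
  simpa using U.sub_mem hpU (hlt.le hw)
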